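/- arXiv:2306.08914 — 2 statements merged into one kernel-verified Lean document; each statement's English description precedes it below -/
import Mathlib

section
/- Let α₁, α₂ > 0 and T₀ > 0, let 𝕌 ⊆ ℝ^m, define ℓ(x,u) = (α₁ g(x)ᵀH_x(x) − α₂ T₀ g(x)ᵀS_x(x))ᵀ u, and define 𝒮 = {(x̄, ū) ∈ 𝒯 × 𝕌 : g(x̄) ū = −J₀(x̄) H_x(x̄)}. Then: (i) every (x̂, û) ∈ 𝒮 is a steady state of the RIPHS (i.e., (J₀(x̂) + Σ_k γ_k(x̂){S,H}_{J_k}(x̂) J_k) H_x(x̂) + g(x̂)û = 0) with ℓ(x̂, û) = 0; (ii) conversely, every steady state (x̄, ū) ∈ 𝕏 × 𝕌 with ℓ(x̄, ū) = 0 belongs to 𝒮. Consequently, if 𝒮 ≠ ∅, then the minimum of ℓ over steady states in 𝕏 × 𝕌 is 0 and 𝒮 equals the set of minimizers. -/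
/-!
At a steady state the input term `g(x)u` equals `-(J₀ + Σ γ_k {S,H}_{J_k} J_k) H_x`. Pairing with
`H_x` kills every term by skew-symmetry, and pairing with `S_x` kills the `J₀` term by the Casimir
property and leaves `{S,H}_{J_k}` from each `J_k`. Hence the stage cost of a steady state is
`α₂ T₀ Σ_k γ_k {S,H}_{J_k}²`, which is nonnegative and vanishes exactly at thermodynamic
equilibria, where the steady-state equation reduces to `g(x)u = -J₀(x)H_x(x)`.
-/

open Set Matrix

/-- Matrix–vector multiplication on Euclidean space. -/
noncomputable def mv {a b : ℕ} (A : Matrix (Fin a) (Fin b) ℝ)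
    (x : EuclideanSpace ℝ (Fin b)) : EuclideanSpace ℝ (Fin a) :=
  Matrix.toEuclideanLin A x

/-- The Poisson bracket `{S,H}_J(x) = S_x(x)ᵀ J H_x(x)`, evaluated at given gradients. -/
noncomputable def bracket {n : ℕ} (J : Matrix (Fin n) (Fin n) ℝ)
    (Sx Hx : EuclideanSpace ℝ (Fin n)) : ℝ :=
  inner ℝ Sx (mv J Hx)

/-- The stage cost `ℓ(x,u) = (α₁ g(x)ᵀH_x(x) − α₂T₀ g(x)ᵀS_x(x))ᵀ u`. -/
noncomputable def stageCost {n m : ℕ} (α₁ α₂ T₀ : ℝ)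
    (g : EuclideanSpace ℝ (Fin n) → Matrix (Fin n) (Fin m) ℝ)
    (Hx Sx : EuclideanSpace ℝ (Fin n) → EuclideanSpace ℝ (Fin n))
    (p : EuclideanSpace ℝ (Fin n)) (w : EuclideanSpace ℝ (Fin m)) : ℝ :=
  inner ℝ (α₁ • mv (g p)ᵀ (Hx p) - (α₂ * T₀) • mv (g p)ᵀ (Sx p)) w

section MatrixVector

variable {a b : ℕ}

lemma mv_add (A B : Matrix (Fin a) (Fin b) ℝ) (x : EuclideanSpace ℝ (Fin b)) :
    mv (A + B) x = mv A x + mv B x := by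
  simp only [mv, map_add, LinearMap.add_apply]

lemma mv_sum {ι : Type*} (s : Finset ι) (A : ι → Matrix (Fin a) (Fin b) ℝ)
    (x : EuclideanSpace ℝ (Fin b)) : mv (∑ k ∈ s, A k) x = ∑ k ∈ s, mv (A k) x := by
  simp only [mv, map_sum, LinearMap.sum_apply]

lemma mv_smul (c : ℝ) (A : Matrix (Fin a) (Fin b) ℝ) (x : EuclideanSpace ℝ (Fin b)) :
    mv (c • A) x = c • mv A x := by
  simp only [mv, _root_.map_smul, LinearMap.smul_apply]

lemma mv_neg (A : Matrix (Fin a) (Fin b) ℝ) (x : EuclideanSpace ℝ (Fin b)) :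
    mv (-A) x = -mv A x := by
  simp only [mv, map_neg, LinearMap.neg_apply]

lemma inner_mv_transpose (A : Matrix (Fin a) (Fin b) ℝ)
    (x : EuclideanSpace ℝ (Fin a)) (y : EuclideanSpace ℝ (Fin b)) :
    inner ℝ (mv Aᵀ x) y = inner ℝ x (mv A y) := by
  rw [mv, mv, ← Matrix.conjTranspose_eq_transpose_of_trivial,
    Matrix.toEuclideanLin_conjTranspose_eq_adjoint, LinearMap.adjoint_inner_left]

end MatrixVector

section Skew

variable {n : ℕ} {A : Matrix (Fin n) (Fin n) ℝ}

lemma inner_mv_eq_neg_of_transpose_eq_neg (hA : Aᵀ = -A) (x y : EuclideanSpace ℝ (Fin n)) :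
    inner ℝ x (mv A y) = -inner ℝ y (mv A x) := by
  rw [← inner_mv_transpose, hA, mv_neg, inner_neg_left, real_inner_comm]

lemma inner_mv_self_of_transpose_eq_neg (hA : Aᵀ = -A) (x : EuclideanSpace ℝ (Fin n)) :
    inner ℝ x (mv A x) = 0 := by
  linarith [inner_mv_eq_neg_of_transpose_eq_neg hA x x]

lemma inner_mv_eq_zero_of_casimir (hA : Aᵀ = -A) {s : EuclideanSpace ℝ (Fin n)}
    (hs : mv A s = 0) (x : EuclideanSpace ℝ (Fin n)) : inner ℝ s (mv A x) = 0 := by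
  rw [inner_mv_eq_neg_of_transpose_eq_neg hA, hs, inner_zero_right, neg_zero]

end Skew

lemma Finset.sum_mul_sq_eq_zero_iff {ι : Type*} {s : Finset ι} {c b : ι → ℝ}
    (hc : ∀ k ∈ s, 0 < c k) : ∑ k ∈ s, c k * b k ^ 2 = 0 ↔ ∀ k ∈ s, b k = 0 := by
  rw [Finset.sum_eq_zero_iff_of_nonneg fun k hk => by have := hc k hk; positivity]
  refine forall₂_congr fun k hk => ?_
  simp [(hc k hk).ne']

section SteadyState

variable {n m N : ℕ} {J0 : Matrix (Fin n) (Fin n) ℝ} {J : Fin N → Matrix (Fin n) (Fin n) ℝ}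
  {γ : Fin N → ℝ} {G : Matrix (Fin n) (Fin m) ℝ} {h s : EuclideanSpace ℝ (Fin n)}
  {w : EuclideanSpace ℝ (Fin m)}

lemma steady_iff_of_bracket_eq_zero (hbr : ∀ k, bracket (J k) s h = 0) :
    mv (J0 + ∑ k, (γ k * bracket (J k) s h) • J k) h + mv G w = 0 ↔ mv G w = -mv J0 h := by
  simp only [hbr, mul_zero, zero_smul, Finset.sum_const_zero, add_zero]
  exact ⟨eq_neg_of_add_eq_zero_right, fun hG => by rw [hG, add_neg_cancel]⟩

lemma stageCost_eq_of_steady (α₁ α₂ T₀ : ℝ)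
    (g : EuclideanSpace ℝ (Fin n) → Matrix (Fin n) (Fin m) ℝ)
    (Hx Sx : EuclideanSpace ℝ (Fin n) → EuclideanSpace ℝ (Fin n))
    (p : EuclideanSpace ℝ (Fin n)) (hJ0 : J0ᵀ = -J0) (hJ : ∀ k, (J k)ᵀ = -J k)
    (hCasimir : mv J0 (Sx p) = 0)
    (hsteady :
      mv (J0 + ∑ k, (γ k * bracket (J k) (Sx p) (Hx p)) • J k) (Hx p) + mv (g p) w = 0) :
    stageCost α₁ α₂ T₀ g Hx Sx p w =
      α₂ * T₀ * ∑ k, γ k * bracket (J k) (Sx p) (Hx p) ^ 2 := by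
  have hgw : mv (g p) w = -mv J0 (Hx p) -
      ∑ k, (γ k * bracket (J k) (Sx p) (Hx p)) • mv (J k) (Hx p) := by
    rw [eq_neg_of_add_eq_zero_right hsteady, mv_add, mv_sum]
    simp only [mv_smul]
    abel
  have hbracket : ∀ k, inner ℝ (Sx p) (mv (J k) (Hx p)) = bracket (J k) (Sx p) (Hx p) :=
    fun _ => rfl
  simp only [stageCost, inner_sub_left, real_inner_smul_left, inner_mv_transpose, hgw,
    inner_sub_right, inner_neg_right, inner_sum, real_inner_smul_right,
    inner_mv_self_of_transpose_eq_neg hJ0, inner_mv_eq_zero_of_casimir hJ0 hCasimir,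
    inner_mv_self_of_transpose_eq_neg (hJ _), hbracket]
  simp [sq, mul_assoc]

end SteadyState

theorem optimal_steady_states_general
    (n N m : ℕ)
    (X : Set (EuclideanSpace ℝ (Fin n)))
    (J0 : EuclideanSpace ℝ (Fin n) → Matrix (Fin n) (Fin n) ℝ)
    (hJ0skew : ∀ p ∈ X, (J0 p)ᵀ = -(J0 p))
    (Hx : EuclideanSpace ℝ (Fin n) → EuclideanSpace ℝ (Fin n))
    (Sx : EuclideanSpace ℝ (Fin n) → EuclideanSpace ℝ (Fin n))
    (hCasimir : ∀ p ∈ X, mv (J0 p) (Sx p) = 0)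
    (J : Fin N → Matrix (Fin n) (Fin n) ℝ)
    (hJskew : ∀ k, (J k)ᵀ = -(J k))
    (γ : Fin N → EuclideanSpace ℝ (Fin n) → ℝ)
    (hγpos : ∀ k, ∀ p ∈ X, 0 < γ k p)
    (g : EuclideanSpace ℝ (Fin n) → Matrix (Fin n) (Fin m) ℝ)
    (U : Set (EuclideanSpace ℝ (Fin m)))
    (α₁ α₂ T₀ : ℝ) (hα₂ : 0 < α₂) (hT₀ : 0 < T₀)
    -- the set 𝒮 ⊆ 𝒯 × 𝕌
    (𝒮 : Set (EuclideanSpace ℝ (Fin n) × EuclideanSpace ℝ (Fin m)))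
    (h𝒮 : 𝒮 = {q | (q.1 ∈ X ∧ ∀ k, bracket (J k) (Sx q.1) (Hx q.1) = 0) ∧ q.2 ∈ U ∧
        mv (g q.1) q.2 = -(mv (J0 q.1) (Hx q.1))})
    -- the steady-state predicate
    (Steady : EuclideanSpace ℝ (Fin n) → EuclideanSpace ℝ (Fin m) → Prop)
    (hSteady : ∀ p w, Steady p w ↔
      mv (J0 p + ∑ k, (γ k p * bracket (J k) (Sx p) (Hx p)) • J k) (Hx p)
        + mv (g p) w = 0) :
    -- (i) every element of 𝒮 is a steady state with zero stage cost
    (∀ q ∈ 𝒮, Steady q.1 q.2 ∧ stageCost α₁ α₂ T₀ g Hx Sx q.1 q.2 = 0)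
    -- (ii) every steady state in 𝕏 × 𝕌 with zero stage cost belongs to 𝒮
    ∧ (∀ xbar ∈ X, ∀ ubar ∈ U, Steady xbar ubar →
        stageCost α₁ α₂ T₀ g Hx Sx xbar ubar = 0 → (xbar, ubar) ∈ 𝒮)
    -- consequently: if 𝒮 ≠ ∅, the minimal steady-state cost is 0 and 𝒮 is the set of minimizers
    ∧ (𝒮.Nonempty →
        IsLeast {c : ℝ | ∃ xbar ∈ X, ∃ ubar ∈ U, Steady xbar ubar ∧
            c = stageCost α₁ α₂ T₀ g Hx Sx xbar ubar} 0
        ∧ 𝒮 = {q | q.1 ∈ X ∧ q.2 ∈ U ∧ Steady q.1 q.2 ∧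
            stageCost α₁ α₂ T₀ g Hx Sx q.1 q.2 = 0}) := by
  have cost : ∀ p ∈ X, ∀ w, Steady p w → stageCost α₁ α₂ T₀ g Hx Sx p w =
      α₂ * T₀ * ∑ k, γ k p * bracket (J k) (Sx p) (Hx p) ^ 2 := fun p hp w hst =>
    stageCost_eq_of_steady α₁ α₂ T₀ g Hx Sx p (hJ0skew p hp) hJskew (hCasimir p hp)
      ((hSteady p w).1 hst)
  have cost_eq_zero : ∀ p ∈ X, ∀ w, Steady p w →
      (stageCost α₁ α₂ T₀ g Hx Sx p w = 0 ↔ ∀ k, bracket (J k) (Sx p) (Hx p) = 0) :=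
    fun p hp w hst => by
      simp [cost p hp w hst, hα₂.ne', hT₀.ne',
        Finset.sum_mul_sq_eq_zero_iff fun k _ => hγpos k p hp]
  have mem_𝒮 : ∀ q, q ∈ 𝒮 ↔ q.1 ∈ X ∧ q.2 ∈ U ∧ Steady q.1 q.2 ∧
      stageCost α₁ α₂ T₀ g Hx Sx q.1 q.2 = 0 := by
    rintro ⟨p, w⟩
    rw [h𝒮]
    constructor
    · rintro ⟨⟨hp, hbr⟩, hw, hgw⟩
      have hst := (hSteady p w).2 ((steady_iff_of_bracket_eq_zero hbr).2 hgw)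
      exact ⟨hp, hw, hst, (cost_eq_zero p hp w hst).2 hbr⟩
    · rintro ⟨hp, hw, hst, hc⟩
      have hbr := (cost_eq_zero p hp w hst).1 hc
      exact ⟨⟨hp, hbr⟩, hw, (steady_iff_of_bracket_eq_zero hbr).1 ((hSteady p w).1 hst)⟩
  refine ⟨fun q hq => ((mem_𝒮 q).1 hq).2.2,
    fun p hp w hw hst hc => (mem_𝒮 _).2 ⟨hp, hw, hst, hc⟩,
    fun ⟨q, hq⟩ => ⟨⟨?_, ?_⟩, Set.ext mem_𝒮⟩⟩
  · obtain ⟨hp, hw, hst, hc⟩ := (mem_𝒮 q).1 hq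
    exact ⟨q.1, hp, q.2, hw, hst, hc.symm⟩
  · rintro c ⟨p, hp, w, hw, hst, rfl⟩
    rw [cost p hp w hst]
    exact mul_nonneg (mul_pos hα₂ hT₀).le
      (Finset.sum_nonneg fun k _ => mul_nonneg (hγpos k p hp).le (sq_nonneg _))

/-- Characterization of optimal steady states: every element of
`𝒮 = {(x̄,ū) ∈ 𝒯 × 𝕌 : g(x̄)ū = −J₀(x̄)H_x(x̄)}` is a steady state with zero stage
cost; conversely every steady state in `𝕏 × 𝕌` with zero stage cost lies in `𝒮`;
consequently, if `𝒮 ≠ ∅`, the minimum of `ℓ` over steady states in `𝕏 × 𝕌` is `0`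
and `𝒮` equals the set of minimizers. -/
theorem optimal_steady_states
    (n N m : ℕ)
    (X : Set (EuclideanSpace ℝ (Fin n))) (hXopen : IsOpen X)
    (J0 : EuclideanSpace ℝ (Fin n) → Matrix (Fin n) (Fin n) ℝ)
    (hJ0cont : ContinuousOn J0 X)
    (hJ0skew : ∀ p ∈ X, (J0 p)ᵀ = -(J0 p))
    (H : EuclideanSpace ℝ (Fin n) → ℝ)
    (Hx : EuclideanSpace ℝ (Fin n) → EuclideanSpace ℝ (Fin n))
    (hH : ∀ p ∈ X, HasGradientAt H (Hx p) p)
    (hHxcont : ContinuousOn Hx X)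
    (S : EuclideanSpace ℝ (Fin n) → ℝ)
    (Sx : EuclideanSpace ℝ (Fin n) → EuclideanSpace ℝ (Fin n))
    (hS : ∀ p ∈ X, HasGradientAt S (Sx p) p)
    (hSxcont : ContinuousOn Sx X)
    (hCasimir : ∀ p ∈ X, mv (J0 p) (Sx p) = 0)
    (J : Fin N → Matrix (Fin n) (Fin n) ℝ)
    (hJskew : ∀ k, (J k)ᵀ = -(J k))
    (γ : Fin N → EuclideanSpace ℝ (Fin n) → ℝ)
    (hγpos : ∀ k, ∀ p ∈ X, 0 < γ k p)
    (hγcont : ∀ k, ContinuousOn (γ k) X)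
    (g : EuclideanSpace ℝ (Fin n) → Matrix (Fin n) (Fin m) ℝ)
    (hgcont : ContinuousOn g X)
    (U : Set (EuclideanSpace ℝ (Fin m)))
    (α₁ α₂ T₀ : ℝ) (hα₁ : 0 < α₁) (hα₂ : 0 < α₂) (hT₀ : 0 < T₀)
    -- the set 𝒮 ⊆ 𝒯 × 𝕌
    (𝒮 : Set (EuclideanSpace ℝ (Fin n) × EuclideanSpace ℝ (Fin m)))
    (h𝒮 : 𝒮 = {q | (q.1 ∈ X ∧ ∀ k, bracket (J k) (Sx q.1) (Hx q.1) = 0) ∧ q.2 ∈ U ∧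
        mv (g q.1) q.2 = -(mv (J0 q.1) (Hx q.1))})
    -- the steady-state predicate
    (Steady : EuclideanSpace ℝ (Fin n) → EuclideanSpace ℝ (Fin m) → Prop)
    (hSteady : ∀ p w, Steady p w ↔
      mv (J0 p + ∑ k, (γ k p * bracket (J k) (Sx p) (Hx p)) • J k) (Hx p)
        + mv (g p) w = 0) :
    -- (i) every element of 𝒮 is a steady state with zero stage cost
    (∀ q ∈ 𝒮, Steady q.1 q.2 ∧ stageCost α₁ α₂ T₀ g Hx Sx q.1 q.2 = 0)
    -- (ii) every steady state in 𝕏 × 𝕌 with zero stage cost belongs to 𝒮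
    ∧ (∀ xbar ∈ X, ∀ ubar ∈ U, Steady xbar ubar →
        stageCost α₁ α₂ T₀ g Hx Sx xbar ubar = 0 → (xbar, ubar) ∈ 𝒮)
    -- consequently: if 𝒮 ≠ ∅, the minimal steady-state cost is 0 and 𝒮 is the set of minimizers
    ∧ (𝒮.Nonempty →
        IsLeast {c : ℝ | ∃ xbar ∈ X, ∃ ubar ∈ U, Steady xbar ubar ∧
            c = stageCost α₁ α₂ T₀ g Hx Sx xbar ubar} 0
        ∧ 𝒮 = {q | q.1 ∈ X ∧ q.2 ∈ U ∧ Steady q.1 q.2 ∧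
            stageCost α₁ α₂ T₀ g Hx Sx q.1 q.2 = 0}) :=
  optimal_steady_states_general n N m X J0 hJ0skew Hx Sx hCasimir J hJskew γ hγpos g U α₁ α₂ T₀ hα₂
    hT₀ 𝒮 h𝒮 Steady hSteady
end

section
/- Let 𝕏 ⊆ ℝⁿ be open, let 𝕐 ⊆ ℝⁿ be open, and let Φ : 𝕏 → 𝕐 be a C¹-diffeomorphism (playing the role of the gradient map H_x). Let V ⊆ ℝⁿ be a linear subspace with V ∩ 𝕐 ≠ ∅. Then for every compact set K ⊆ 𝕏 there exists c > 0 such that for all x ∈ K: dist(x, Φ⁻¹(V ∩ 𝕐)) ≤ c · dist(Φ(x), V), where dist(x, M) = inf_{z ∈ M} ‖x − z‖. -/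
/-!
Near a point `x₀` with `Φ x₀ ∈ V`, the inverse `Ψ` is Lipschitz around `Φ x₀`, so applying it to a
nearest point of `V` to `Φ x` gives a point of `Φ⁻¹(V ∩ 𝕐)` within `L · dist(Φ x, V)` of `x`.
Near a point with `Φ x₀ ∉ V`, `dist(Φ x, V)` stays bounded away from `0` while
`dist(x, Φ⁻¹(V ∩ 𝕐))` is continuous. Compactness of `K` turns these local constants into one.
-/

open Set Metric Filter Topology
open scoped NNReal

theorem IsCompact.exists_pos_forall_le_mul_of_eventually {X : Type*} [TopologicalSpace X]
    {K : Set X} {f g : X → ℝ} (hK : IsCompact K) (hg : ∀ x, 0 ≤ g x)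
    (hloc : ∀ x ∈ K, ∃ c, ∀ᶠ y in 𝓝 x, f y ≤ c * g y) :
    ∃ c > 0, ∀ x ∈ K, f x ≤ c * g x := by
  refine hK.induction_on (p := fun s ↦ ∃ c > 0, ∀ x ∈ s, f x ≤ c * g x)
    ⟨1, one_pos, fun _ h ↦ h.elim⟩ (fun s t hst ⟨c, hc, h⟩ ↦ ⟨c, hc, fun x hx ↦ h x (hst hx)⟩)
    ?_ fun x hx ↦ ?_
  · rintro s t ⟨c, hc, hs⟩ ⟨d, -, ht⟩
    refine ⟨max c d, lt_max_of_lt_left hc, fun x hx ↦ ?_⟩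
    rcases hx with hx | hx
    · exact (hs x hx).trans (by gcongr; exacts [hg x, le_max_left c d])
    · exact (ht x hx).trans (by gcongr; exacts [hg x, le_max_right c d])
  · obtain ⟨c, hc⟩ := hloc x hx
    refine ⟨_, mem_nhdsWithin_of_mem_nhds hc, max c 1, one_pos.trans_le (le_max_right c 1),
      fun y hy ↦ (show f y ≤ c * g y from hy).trans ?_⟩
    gcongr
    exacts [hg y, le_max_left c 1]

theorem ContinuousAt.exists_eventually_le_mul {X : Type*} [TopologicalSpace X] {f g : X → ℝ}
    {x₀ : X} (hf : ContinuousAt f x₀) (hg : ContinuousAt g x₀) (hg₀ : 0 < g x₀) :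
    ∃ c, ∀ᶠ x in 𝓝 x₀, f x ≤ c * g x := by
  have hquot : ∀ᶠ x in 𝓝 x₀, f x / g x < f x₀ / g x₀ + 1 :=
    (hf.div hg hg₀.ne').eventually (gt_mem_nhds (lt_add_one _))
  refine ⟨f x₀ / g x₀ + 1, (hquot.and (hg.eventually (lt_mem_nhds hg₀))).mono ?_⟩
  rintro x ⟨hx, hgx⟩
  rw [div_lt_iff₀ hgx] at hx
  exact hx.le

theorem infDist_image_le_mul_infDist_of_lipschitzOnWith_ball {E F : Type*} [PseudoMetricSpace E]
    [MetricSpace F] [ProperSpace F] {Ψ : F → E} {S : Set E} {V : Set F} {z y : F} {ε : ℝ}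
    {L : ℝ≥0} (hV : IsClosed V) (hz : z ∈ V) (hΨ : LipschitzOnWith L Ψ (ball z ε))
    (hS : MapsTo Ψ (V ∩ ball z ε) S) (hy : dist y z < ε / 2) :
    infDist (Ψ y) S ≤ L * infDist y V := by
  obtain ⟨v, hvV, hv⟩ := hV.exists_infDist_eq_dist ⟨z, hz⟩ y
  have hvy : dist y v ≤ dist y z := hv ▸ infDist_le_dist_of_mem hz
  have hvz : v ∈ ball z ε := by
    rw [mem_ball]
    linarith [dist_triangle_left v z y]
  have hyz : y ∈ ball z ε := mem_ball.2 (by linarith [dist_nonneg (x := y) (y := z)])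
  calc infDist (Ψ y) S ≤ dist (Ψ y) (Ψ v) := infDist_le_dist_of_mem (hS ⟨hvV, hvz⟩)
    _ ≤ L * dist y v := hΨ.dist_le_mul y hyz v hvz
    _ = L * infDist y V := by rw [hv]

section LocalBound

variable {E F : Type*} [NormedAddCommGroup E] [NormedSpace ℝ E]
  [NormedAddCommGroup F] [NormedSpace ℝ F] [ProperSpace F]
  {X : Set E} {Y : Set F} {Φ : E → F} {Ψ : F → E} {V : Set F}

theorem exists_eventually_infDist_preimage_le_mul_of_mem (hX : IsOpen X) (hY : IsOpen Y)
    (hΦ : ContinuousOn Φ X) (hΨ : ContDiffOn ℝ 1 Ψ Y) (hΦmaps : MapsTo Φ X Y)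
    (hΨmaps : MapsTo Ψ Y X) (hleft : ∀ p ∈ X, Ψ (Φ p) = p) (hright : ∀ q ∈ Y, Φ (Ψ q) = q)
    (hV : IsClosed V) {x₀ : E} (hx₀ : x₀ ∈ X) (hΦx₀ : Φ x₀ ∈ V) :
    ∃ c, ∀ᶠ x in 𝓝 x₀, infDist x (Φ ⁻¹' (V ∩ Y) ∩ X) ≤ c * infDist (Φ x) V := by
  obtain ⟨L, t, ht, hLip⟩ := (hΨ.contDiffAt (hY.mem_nhds (hΦmaps hx₀))).exists_lipschitzOnWith
  obtain ⟨ε, hε, hball⟩ := Metric.mem_nhds_iff.1 (inter_mem ht (hY.mem_nhds (hΦmaps hx₀)))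
  have hmaps : MapsTo Ψ (V ∩ ball (Φ x₀) ε) (Φ ⁻¹' (V ∩ Y) ∩ X) := by
    rintro v ⟨hvV, hv⟩
    have hvY : v ∈ Y := (hball hv).2
    exact ⟨⟨(hright v hvY).symm ▸ hvV, (hright v hvY).symm ▸ hvY⟩, hΨmaps hvY⟩
  have hnear : ∀ᶠ x in 𝓝 x₀, x ∈ X ∧ dist (Φ x) (Φ x₀) < ε / 2 :=
    (hX.eventually_mem hx₀).and
      ((hΦ.continuousAt (hX.mem_nhds hx₀)).eventually (ball_mem_nhds _ (half_pos hε)))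
  refine ⟨L, hnear.mono fun x ⟨hxX, hx⟩ ↦ ?_⟩
  have := infDist_image_le_mul_infDist_of_lipschitzOnWith_ball hV hΦx₀
    (hLip.mono fun w hw ↦ (hball hw).1) hmaps hx
  rwa [hleft x hxX] at this

theorem exists_eventually_infDist_preimage_le_mul (hX : IsOpen X) (hY : IsOpen Y)
    (hΦ : ContinuousOn Φ X) (hΨ : ContDiffOn ℝ 1 Ψ Y) (hΦmaps : MapsTo Φ X Y)
    (hΨmaps : MapsTo Ψ Y X) (hleft : ∀ p ∈ X, Ψ (Φ p) = p) (hright : ∀ q ∈ Y, Φ (Ψ q) = q)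
    (hV : IsClosed V) (hVne : V.Nonempty) {x₀ : E} (hx₀ : x₀ ∈ X) :
    ∃ c, ∀ᶠ x in 𝓝 x₀, infDist x (Φ ⁻¹' (V ∩ Y) ∩ X) ≤ c * infDist (Φ x) V := by
  by_cases hΦx₀ : Φ x₀ ∈ V
  · exact exists_eventually_infDist_preimage_le_mul_of_mem hX hY hΦ hΨ hΦmaps hΨmaps hleft
      hright hV hx₀ hΦx₀
  · exact (continuous_infDist_pt _).continuousAt.exists_eventually_le_mul
      ((continuous_infDist_pt V).continuousAt.comp (hΦ.continuousAt (hX.mem_nhds hx₀)))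
      ((hV.notMem_iff_infDist_pos hVne).1 hΦx₀)

end LocalBound

theorem dist_preimage_le_dist_image_general
    (n : ℕ)
    (X Y : Set (EuclideanSpace ℝ (Fin n))) (hX : IsOpen X) (hY : IsOpen Y)
    (Φ Ψ : EuclideanSpace ℝ (Fin n) → EuclideanSpace ℝ (Fin n))
    (hΦC1 : ContDiffOn ℝ 1 Φ X) (hΨC1 : ContDiffOn ℝ 1 Ψ Y)
    (hΦmaps : MapsTo Φ X Y) (hΨmaps : MapsTo Ψ Y X)
    (hleft : ∀ p ∈ X, Ψ (Φ p) = p) (hright : ∀ q ∈ Y, Φ (Ψ q) = q)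
    (V : Submodule ℝ (EuclideanSpace ℝ (Fin n))) :
    ∀ K ⊆ X, IsCompact K → ∃ c > (0:ℝ), ∀ x ∈ K,
      infDist x (Φ ⁻¹' ((V : Set (EuclideanSpace ℝ (Fin n))) ∩ Y) ∩ X)
        ≤ c * infDist (Φ x) (V : Set (EuclideanSpace ℝ (Fin n))) := by
  intro K hKX hK
  exact hK.exists_pos_forall_le_mul_of_eventually (fun _ ↦ infDist_nonneg) fun x hx ↦
    exists_eventually_infDist_preimage_le_mul hX hY hΦC1.continuousOn hΨC1 hΦmaps hΨmaps hleft
      hright V.closed_of_finiteDimensional ⟨0, V.zero_mem⟩ (hKX hx)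

/-- For a C¹-diffeomorphism `Φ : 𝕏 → 𝕐` between open subsets of `ℝⁿ` and a linear
subspace `V` meeting `𝕐`, on every compact `K ⊆ 𝕏` one has
`dist(x, Φ⁻¹(V ∩ 𝕐)) ≤ c · dist(Φ(x), V)`. -/
theorem dist_preimage_le_dist_image
    (n : ℕ)
    (X Y : Set (EuclideanSpace ℝ (Fin n))) (hX : IsOpen X) (hY : IsOpen Y)
    (Φ Ψ : EuclideanSpace ℝ (Fin n) → EuclideanSpace ℝ (Fin n))
    (hΦC1 : ContDiffOn ℝ 1 Φ X) (hΨC1 : ContDiffOn ℝ 1 Ψ Y)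
    (hΦmaps : MapsTo Φ X Y) (hΨmaps : MapsTo Ψ Y X)
    (hleft : ∀ p ∈ X, Ψ (Φ p) = p) (hright : ∀ q ∈ Y, Φ (Ψ q) = q)
    (V : Submodule ℝ (EuclideanSpace ℝ (Fin n)))
    (hVY : ((V : Set (EuclideanSpace ℝ (Fin n))) ∩ Y).Nonempty) :
    ∀ K ⊆ X, IsCompact K → ∃ c > (0:ℝ), ∀ x ∈ K,
      infDist x (Φ ⁻¹' ((V : Set (EuclideanSpace ℝ (Fin n))) ∩ Y) ∩ X)
        ≤ c * infDist (Φ x) (V : Set (EuclideanSpace ℝ (Fin n))) :=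
  dist_preimage_le_dist_image_general n X Y hX hY Φ Ψ hΦC1 hΨC1 hΦmaps hΨmaps hleft hright V
end
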